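/- Let (V; M0,...,M4; c) be a Higmanian matrix configuration with valencies ni = c(i,i,0). Set (as rational numbers) α = n1+1, β = n2/(n1+1), γ = n3(n1+1)/(n3+n4), δ = (n3+n4)/(n1+1), ε = δ−β−1, and τ = c(4,3,4). Then the following four conditions are pairwise equivalent: (i) c(3,3,3) = c(3,3,4); (ii) c(4,3,3) = c(4,3,4); (iii) c(4,4,3) = c(4,4,4); (iv) τ = εγ(α−γ)/α. -/

import Mathlib

/-!
Let `N₁ = M₀ + M₁ + M₂` and `s = 1 + n₁ + n₂`, so that `N₁² = s N₁`, and write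
`N₁ Mⱼ = ∑ₖ d(j,k) Mₖ` (`coeffN1`). Since `N₁` is an equivalence relation, `d(j,k) = 0` when
exactly one of `j, k` is below `3`; hence `N₁ M₃ = x M₃ + y M₄` and `N₁ M₄ = x' M₃ + y' M₄`
with `x + x' = y + y' = s` and `x n₃ + y n₄ = s n₃`. Associativity `N₁ (N₁ M₃) = s N₁ M₃`
gives `y x' = x x'`, and `x' ≠ 0`: otherwise `x = s` forces `y = 0`, i.e. `N₁ M₃ = s M₃`,
which would put `N₁` into the radical of `M₃`. So `x = y` and `x' = y'`, and the column sums
`∑ᵢ c(i,j,k) = nⱼ` turn these into `c₃₃₃ + c₄₃₃ = c₃₃₄ + c₄₃₄` and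
`c₄₃₃ + c₄₄₃ = c₄₃₄ + c₄₄₄`, i.e. (i) ⇔ (ii) ⇔ (iii). Finally `y = s n₃ / (n₃ + n₄)` and
`c₃₃₄ n₄ = c₄₃₃ n₃` turn (ii) into `τ (n₃ + n₄)² = n₃ n₄ (n₃ + n₄ - s)`, which is (iv).
-/

open Matrix Finset

/-- A *Higmanian matrix configuration* on a nonempty finite set `V`:
five nonzero symmetric `{0,1}`-matrices `M 0, …, M 4` over `ℤ` summing to the all-ones
matrix, with `M 0 = I`, structure constants `c`, parabolic conditions for
`N0 = M0 + M1` and `N1 = M0 + M1 + M2`, standard ordering `n3 ≤ n4`, and triviality of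
the radicals of `M 3` and `M 4`. -/
structure HigmanianConfig (V : Type*) [Fintype V] [DecidableEq V] : Type _ where
  nonempty : Nonempty V
  M : Fin 5 → Matrix V V ℤ
  c : Fin 5 → Fin 5 → Fin 5 → ℕ
  M_ne_zero : ∀ i, M i ≠ 0
  M_symm : ∀ i, (M i)ᵀ = M i
  M_entries : ∀ i x y, M i x y = 0 ∨ M i x y = 1
  M_zero : M 0 = 1
  sum_M : M 0 + M 1 + M 2 + M 3 + M 4 = Matrix.of fun _ _ => 1
  mul_M : ∀ i j, M i * M j = ∑ k : Fin 5, (c i j k : ℤ) • M k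
  N0_sq : (M 0 + M 1) * (M 0 + M 1) = ((1 + c 1 1 0 : ℕ) : ℤ) • (M 0 + M 1)
  N1_sq : (M 0 + M 1 + M 2) * (M 0 + M 1 + M 2)
      = ((1 + c 1 1 0 + c 2 2 0 : ℕ) : ℤ) • (M 0 + M 1 + M 2)
  N1_ne_J : M 0 + M 1 + M 2 ≠ Matrix.of fun _ _ => 1
  n3_le_n4 : c 3 3 0 ≤ c 4 4 0
  radical : ∀ j ∈ ({3, 4} : Finset (Fin 5)), ∀ T : Finset (Fin 5),
    T.Nonempty → T ⊆ ({1, 2, 3, 4} : Finset (Fin 5)) →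
    ¬ ((1 + ∑ t ∈ T, M t) * (1 + ∑ t ∈ T, M t)
          = (1 + ∑ t ∈ T, (c t t 0 : ℤ)) • (1 + ∑ t ∈ T, M t)
        ∧ (1 + ∑ t ∈ T, M t) * M j = (1 + ∑ t ∈ T, (c t t 0 : ℤ)) • M j)

/-- The valency `nᵢ = c i i 0` of the `i`-th basis matrix. -/
def HigmanianConfig.n {V : Type*} [Fintype V] [DecidableEq V]
    (X : HigmanianConfig V) (i : Fin 5) : ℕ := X.c i i 0

namespace HigmanianConfig

variable {V : Type*} [Fintype V] [DecidableEq V] (X : HigmanianConfig V)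

lemma sum_univ_M : ∑ i, X.M i = of fun _ _ => 1 := by
  rw [Fin.sum_univ_five]
  exact X.sum_M

lemma sum_M_apply (x y : V) : ∑ i, X.M i x y = 1 := by
  simpa [Matrix.sum_apply] using congrFun (congrFun X.sum_univ_M x) y

lemma M_apply_nonneg (i : Fin 5) (x y : V) : 0 ≤ X.M i x y := by
  rcases X.M_entries i x y with h | h <;> simp [h]

lemma M_apply_comm (i : Fin 5) (x y : V) : X.M i x y = X.M i y x := by
  rw [← transpose_apply (X.M i), X.M_symm]

lemma M_apply_eq_zero_of_ne {i k : Fin 5} {x y : V} (hk : X.M k x y = 1) (hik : i ≠ k) :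
    X.M i x y = 0 := by
  have h := X.sum_M_apply x y
  rw [← add_sum_erase _ _ (mem_univ k), hk, add_eq_left] at h
  exact (sum_eq_zero_iff_of_nonneg fun j _ => X.M_apply_nonneg j x y).1 h i
    (mem_erase.2 ⟨hik, mem_univ i⟩)

lemma exists_M_apply_eq_one (i : Fin 5) : ∃ x y, X.M i x y = 1 := by
  by_contra! h
  exact X.M_ne_zero i (ext fun x y => (X.M_entries i x y).resolve_right (h x y))

lemma sum_smul_M_apply (a : Fin 5 → ℤ) {k : Fin 5} {x y : V} (hk : X.M k x y = 1) :
    (∑ i, a i • X.M i) x y = a k := by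
  rw [Matrix.sum_apply, sum_eq_single k (fun i _ hik => by simp [X.M_apply_eq_zero_of_ne hk hik])
    (by simp)]
  simp [hk]

lemma coeff_eq_of_sum_smul_M_eq {a b : Fin 5 → ℤ}
    (h : ∑ i, a i • X.M i = ∑ i, b i • X.M i) : a = b := by
  funext k
  obtain ⟨x, y, hk⟩ := X.exists_M_apply_eq_one k
  simpa only [X.sum_smul_M_apply _ hk] using congrFun (congrFun h x) y

lemma M_apply_mul_M_apply (i j : Fin 5) (x z : V) :
    X.M i x z * X.M j x z = if i = j then X.M i x z else 0 := by
  rcases X.M_entries i x z with h | h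
  · simp [h]
  · by_cases hij : i = j
    · subst hij; simp [h]
    · simp [h, hij, X.M_apply_eq_zero_of_ne h (Ne.symm hij)]

lemma mul_M_apply_self (i j : Fin 5) (x : V) :
    (X.M i * X.M j) x x = if i = j then ∑ z, X.M i x z else 0 := by
  have h : ∀ z, X.M i x z * X.M j z x = if i = j then X.M i x z else 0 := fun z => by
    rw [← X.M_apply_comm j x z, X.M_apply_mul_M_apply]
  rw [mul_apply, sum_congr rfl fun z _ => h z]
  split_ifs <;> simp

lemma sum_M_row (i : Fin 5) (x : V) : ∑ z, X.M i x z = X.n i := by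
  have h := congrFun (congrFun (X.mul_M i i) x) x
  rwa [X.mul_M_apply_self, if_pos rfl, X.sum_smul_M_apply _ (k := 0) (by simp [X.M_zero])] at h

lemma n_pos (i : Fin 5) : 0 < X.n i := by
  obtain ⟨x, y, h⟩ := X.exists_M_apply_eq_one i
  have : (1 : ℤ) ≤ X.n i := by
    rw [← X.sum_M_row i x, ← h]
    exact single_le_sum (fun z _ => X.M_apply_nonneg i x z) (mem_univ y)
  omega

lemma n_zero : X.n 0 = 1 := by
  obtain ⟨x⟩ := X.nonempty
  have h := X.sum_M_row 0 x
  simp only [X.M_zero, one_apply, sum_ite_eq, mem_univ, if_true] at h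
  exact_mod_cast h.symm

lemma trace_M_mul_M (i j : Fin 5) :
    trace (X.M i * X.M j) = if i = j then (Fintype.card V : ℤ) * X.n i else 0 := by
  simp only [trace, diag_apply, X.mul_M_apply_self, X.sum_M_row]
  split_ifs <;> simp

lemma trace_M_mul_M_mul_M (i j k : Fin 5) :
    trace (X.M i * X.M j * X.M k) = X.c i j k * ((Fintype.card V : ℤ) * X.n k) := by
  rw [X.mul_M i j, sum_mul, trace_sum]
  simp_rw [smul_mul_assoc, trace_smul, X.trace_M_mul_M]
  simp

lemma c_mul_n (i j k : Fin 5) : X.c i j k * X.n k = X.c k i j * X.n j := by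
  have hcard : (Fintype.card V : ℤ) ≠ 0 := by
    have := X.nonempty
    positivity
  have h := X.trace_M_mul_M_mul_M i j k
  rw [trace_mul_cycle, X.trace_M_mul_M_mul_M] at h
  have : (X.c i j k : ℤ) * X.n k = X.c k i j * X.n j :=
    mul_left_cancel₀ hcard (by linear_combination -h)
  exact_mod_cast this

lemma M_mul_M_comm (i j : Fin 5) : X.M i * X.M j = X.M j * X.M i := by
  have h : (X.M i * X.M j)ᵀ = X.M i * X.M j := by
    simp only [X.mul_M i j, transpose_sum, transpose_smul, X.M_symm]
  rw [← h, transpose_mul, X.M_symm, X.M_symm]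

lemma c_comm (i j k : Fin 5) : X.c i j k = X.c j i k := by
  have h := X.coeff_eq_of_sum_smul_M_eq (a := fun k => (X.c i j k : ℤ))
    (b := fun k => (X.c j i k : ℤ)) (by rw [← X.mul_M, ← X.mul_M, X.M_mul_M_comm])
  exact_mod_cast congrFun h k

lemma M_mul_sum_univ_M (i : Fin 5) : X.M i * ∑ j, X.M j = (X.n i : ℤ) • ∑ j, X.M j := by
  rw [X.sum_univ_M]
  ext x y
  simp [mul_apply, X.sum_M_row]

lemma sum_c (i k : Fin 5) : ∑ j, X.c i j k = X.n i := by
  have h : ∑ k, (∑ j, (X.c i j k : ℤ)) • X.M k = ∑ k, (X.n i : ℤ) • X.M k := by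
    simp_rw [sum_smul]
    rw [sum_comm, ← smul_sum, ← X.M_mul_sum_univ_M, mul_sum]
    simp_rw [X.mul_M]
  exact_mod_cast congrFun (X.coeff_eq_of_sum_smul_M_eq h) k

lemma sum_c_mul_n (i j : Fin 5) : ∑ k, X.c i j k * X.n k = X.n i * X.n j := by
  simp_rw [X.c_mul_n i j, ← sum_mul, X.c_comm _ i j, X.sum_c]

def N1 : Matrix V V ℤ := X.M 0 + X.M 1 + X.M 2

def coeffN1 (j k : Fin 5) : ℕ := X.c 0 j k + X.c 1 j k + X.c 2 j k

lemma N1_mul_M (j : Fin 5) : X.N1 * X.M j = ∑ k, (X.coeffN1 j k : ℤ) • X.M k := by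
  simp only [N1, coeffN1, add_mul, X.mul_M, Nat.cast_add, add_smul, sum_add_distrib]

lemma N1_mul_N1 : X.N1 * X.N1 = ((1 + X.n 1 + X.n 2 : ℕ) : ℤ) • X.N1 := X.N1_sq

lemma c_le_coeffN1 {i : Fin 5} (hi : i < 3) (j k : Fin 5) : X.c i j k ≤ X.coeffN1 j k := by
  unfold coeffN1
  obtain rfl | rfl | rfl : i = 0 ∨ i = 1 ∨ i = 2 := by omega
  all_goals omega

lemma coeffN1_eq_zero_of_lt_of_le {j k : Fin 5} (hj : j < 3) (hk : 3 ≤ k) :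
    X.coeffN1 j k = 0 := by
  obtain ⟨x, y, hxy⟩ := X.exists_M_apply_eq_one k
  have hM : ∀ i < (3 : Fin 5), X.M i x y = 0 := fun i hi =>
    X.M_apply_eq_zero_of_ne hxy (ne_of_lt (hi.trans_le hk))
  have h : (X.N1 * (X.M 0 + X.M 1 + X.M 2)) x y = 0 := by
    rw [← N1, X.N1_mul_N1]
    simp [N1, hM 0 (by decide), hM 1 (by decide), hM 2 (by decide)]
  simp only [mul_add, Matrix.add_apply, X.N1_mul_M, X.sum_smul_M_apply _ hxy] at h
  obtain rfl | rfl | rfl : j = 0 ∨ j = 1 ∨ j = 2 := by omega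
  all_goals omega

lemma coeffN1_eq_zero_of_le_of_lt {j k : Fin 5} (hj : 3 ≤ j) (hk : k < 3) :
    X.coeffN1 j k = 0 := by
  have hc : ∀ i < (3 : Fin 5), X.c i j k = 0 := fun i hi => by
    have hrot : X.c k i j = 0 := Nat.eq_zero_of_le_zero
      ((X.c_le_coeffN1 hk i j).trans (X.coeffN1_eq_zero_of_lt_of_le hi hj).le)
    have h := X.c_mul_n i j k
    rw [hrot, zero_mul, mul_eq_zero] at h
    exact h.resolve_right (X.n_pos k).ne'
  simp [coeffN1, hc 0 (by decide), hc 1 (by decide), hc 2 (by decide)]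

lemma sum_coeffN1 (k : Fin 5) : ∑ j, X.coeffN1 j k = 1 + X.n 1 + X.n 2 := by
  simp only [coeffN1, sum_add_distrib, X.sum_c, X.n_zero]

lemma sum_coeffN1_mul_n (j : Fin 5) :
    ∑ k, X.coeffN1 j k * X.n k = (1 + X.n 1 + X.n 2) * X.n j := by
  simp only [coeffN1, add_mul, sum_add_distrib, X.sum_c_mul_n, X.n_zero]

lemma coeffN1_add_c_add_c (j k : Fin 5) : X.coeffN1 j k + X.c 3 j k + X.c 4 j k = X.n j := by
  rw [← X.sum_c j k, Fin.sum_univ_five, X.c_comm j 0, X.c_comm j 1, X.c_comm j 2, X.c_comm j 3,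
    X.c_comm j 4, coeffN1]

lemma sum_coeffN1_mul_coeffN1 (j m : Fin 5) :
    ∑ k, X.coeffN1 j k * X.coeffN1 k m = (1 + X.n 1 + X.n 2) * X.coeffN1 j m := by
  have h : X.N1 * (X.N1 * X.M j) = X.N1 * X.N1 * X.M j := (Matrix.mul_assoc _ _ _).symm
  rw [X.N1_mul_N1, smul_mul_assoc, X.N1_mul_M, mul_sum, smul_sum] at h
  simp_rw [mul_smul_comm, X.N1_mul_M, smul_sum, smul_smul] at h
  rw [sum_comm] at h
  simp_rw [← sum_smul] at h
  exact_mod_cast congrFun (X.coeff_eq_of_sum_smul_M_eq h) m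

lemma coeffN1_three_four_pos : 0 < X.coeffN1 3 4 := by
  refine Nat.pos_of_ne_zero fun h0 => ?_
  have hrow := X.sum_coeffN1_mul_n 3
  simp only [Fin.sum_univ_five, X.coeffN1_eq_zero_of_le_of_lt, Fin.reduceLT, Fin.reduceLE, h0,
    zero_mul, zero_add, add_zero] at hrow
  have hs : X.coeffN1 3 3 = 1 + X.n 1 + X.n 2 := Nat.eq_of_mul_eq_mul_right (X.n_pos 3) hrow
  have hN1 : X.N1 * X.M 3 = ((1 + X.n 1 + X.n 2 : ℕ) : ℤ) • X.M 3 := by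
    simp [X.N1_mul_M, Fin.sum_univ_five, X.coeffN1_eq_zero_of_le_of_lt, hs, h0]
  have hE : 1 + ∑ t ∈ ({1, 2} : Finset (Fin 5)), X.M t = X.N1 := by
    simp [N1, X.M_zero, add_assoc]
  have hn : 1 + ∑ t ∈ ({1, 2} : Finset (Fin 5)), (X.c t t 0 : ℤ)
      = ((1 + X.n 1 + X.n 2 : ℕ) : ℤ) := by
    simp [n, add_assoc]
  apply X.radical 3 (by decide) {1, 2} ⟨1, by decide⟩ (by decide)
  rw [hE, hn]
  exact ⟨X.N1_mul_N1, hN1⟩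

lemma coeffN1_three_three_eq : X.coeffN1 3 3 = X.coeffN1 3 4 := by
  have hassoc := X.sum_coeffN1_mul_coeffN1 3 3
  have hcol := X.sum_coeffN1 3
  have hrow := X.sum_coeffN1_mul_n 3
  simp only [Fin.sum_univ_five, X.coeffN1_eq_zero_of_lt_of_le, X.coeffN1_eq_zero_of_le_of_lt,
    Fin.reduceLT, Fin.reduceLE, zero_mul, mul_zero, zero_add] at hassoc hcol hrow
  rw [← hcol, add_mul, add_right_inj] at hassoc
  have hx' : 0 < X.coeffN1 4 3 := by
    refine Nat.pos_of_ne_zero fun h0 => ?_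
    rw [h0, add_zero] at hcol
    rw [← hcol] at hrow
    have := Nat.mul_pos X.coeffN1_three_four_pos (X.n_pos 4)
    omega
  exact Nat.eq_of_mul_eq_mul_left hx' (by rw [← hassoc, mul_comm])

lemma coeffN1_four_three_eq : X.coeffN1 4 3 = X.coeffN1 4 4 := by
  have h3 := X.sum_coeffN1 3
  have h4 := X.sum_coeffN1 4
  simp only [Fin.sum_univ_five, X.coeffN1_eq_zero_of_lt_of_le, Fin.reduceLT, Fin.reduceLE,
    zero_add] at h3 h4
  have := X.coeffN1_three_three_eq
  omega

lemma coeffN1_three_four_mul :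
    X.coeffN1 3 4 * (X.n 3 + X.n 4) = (1 + X.n 1 + X.n 2) * X.n 3 := by
  have h := X.sum_coeffN1_mul_n 3
  simp only [Fin.sum_univ_five, X.coeffN1_eq_zero_of_le_of_lt, Fin.reduceLT, Fin.reduceLE,
    zero_mul, zero_add, X.coeffN1_three_three_eq] at h
  rw [mul_add, h]

lemma c_four_three_three_eq_iff : X.c 4 3 3 = X.c 4 3 4 ↔
    (X.c 4 3 4 : ℚ) * ((X.n 3 : ℚ) + X.n 4) ^ 2
      = X.n 3 * X.n 4 * ((X.n 3 : ℚ) + X.n 4 - (1 + X.n 1 + X.n 2)) := by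
  have hy : (X.coeffN1 3 4 : ℚ) * (X.n 3 + X.n 4) = (1 + X.n 1 + X.n 2) * X.n 3 := by
    exact_mod_cast X.coeffN1_three_four_mul
  have hcol : (X.coeffN1 3 4 : ℚ) + X.c 3 3 4 + X.c 4 3 4 = X.n 3 := by
    exact_mod_cast X.coeffN1_add_c_add_c 3 4
  have hrot : (X.c 3 3 4 : ℚ) * X.n 4 = X.c 4 3 3 * X.n 3 := by exact_mod_cast X.c_mul_n 3 3 4
  have hpos : (X.n 3 * (X.n 3 + X.n 4) : ℚ) ≠ 0 := by
    have := X.n_pos 3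
    positivity
  have key : (X.c 4 3 4 : ℚ) * ((X.n 3 : ℚ) + X.n 4) ^ 2
      - X.n 3 * X.n 4 * ((X.n 3 : ℚ) + X.n 4 - (1 + X.n 1 + X.n 2))
      = ((X.c 4 3 4 : ℚ) - X.c 4 3 3) * (X.n 3 * (X.n 3 + X.n 4)) := by
    linear_combination (X.n 4 * (X.n 3 + X.n 4) : ℚ) * hcol - (X.n 4 : ℚ) * hy
      - ((X.n 3 : ℚ) + X.n 4) * hrot
  rw [← sub_eq_zero (a := (X.c 4 3 4 : ℚ) * _), key, mul_eq_zero, or_iff_left hpos, sub_eq_zero,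
    eq_comm, Nat.cast_inj]

end HigmanianConfig

/-- for a Higmanian configuration, the conditions
`c(3,3,3)=c(3,3,4)`, `c(4,3,3)=c(4,3,4)`, `c(4,4,3)=c(4,4,4)` and
`τ = εγ(α−γ)/α` are pairwise equivalent. -/
theorem higmanian_tau_equiv {V : Type*} [Fintype V] [DecidableEq V]
    (X : HigmanianConfig V) (α β γ δ ε τ : ℚ)
    (hα : α = (X.n 1 : ℚ) + 1)
    (hβ : β = (X.n 2 : ℚ) / ((X.n 1 : ℚ) + 1))
    (hγ : γ = (X.n 3 : ℚ) * ((X.n 1 : ℚ) + 1) / ((X.n 3 : ℚ) + (X.n 4 : ℚ)))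
    (hδ : δ = ((X.n 3 : ℚ) + (X.n 4 : ℚ)) / ((X.n 1 : ℚ) + 1))
    (hε : ε = δ - β - 1)
    (hτ : τ = (X.c 4 3 4 : ℚ)) :
    (X.c 3 3 3 = X.c 3 3 4 ↔ X.c 4 3 3 = X.c 4 3 4) ∧
    (X.c 3 3 3 = X.c 3 3 4 ↔ X.c 4 4 3 = X.c 4 4 4) ∧
    (X.c 3 3 3 = X.c 3 3 4 ↔ τ = ε * γ * (α - γ) / α) := by
  have hxy := X.coeffN1_three_three_eq
  have hxy' := X.coeffN1_four_three_eq
  have h33 := X.coeffN1_add_c_add_c 3 3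
  have h34 := X.coeffN1_add_c_add_c 3 4
  have h43 := X.coeffN1_add_c_add_c 4 3
  have h44 := X.coeffN1_add_c_add_c 4 4
  rw [X.c_comm 3 4] at h43 h44
  have h_i_ii : X.c 3 3 3 = X.c 3 3 4 ↔ X.c 4 3 3 = X.c 4 3 4 := by omega
  refine ⟨h_i_ii, by omega, ?_⟩
  have hn3 : (0 : ℚ) < X.n 3 := by exact_mod_cast X.n_pos 3
  have hval : ε * γ * (α - γ) / α = X.n 3 * X.n 4 * ((X.n 3 : ℚ) + X.n 4 - (1 + X.n 1 + X.n 2))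
      / ((X.n 3 : ℚ) + X.n 4) ^ 2 := by
    subst hα hβ hγ hδ hε
    field_simp
    ring
  rw [h_i_ii, X.c_four_three_three_eq_iff, hτ, hval, eq_div_iff (by positivity)]
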